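/- For every positive integer s, every positive integer k, and every integer m ≥ s·k, the following holds. Denote by u_1, ..., u_{m+1} the children of the root of T_1^{(s,k,m)} and by v_1, ..., v_{m+1} the children of the root of T_2^{(s,k,m)}, where the subtrees hanging at u_1, ..., u_{m+1} and at v_1, ..., v_m are copies of T_2^{(s-1,k,m)} (with the convention for s = 1 that these are stars of m childless children) and the subtree at v_{m+1} is a copy of T_1^{(s-1,k,m)}. For every 1 ≤ t ≤ m+1 and 1 ≤ t' ≤ m fix a rooted-tree isomorphism φ_{t,t'} from the subtree at u_t onto the subtree at v_{t'} with φ_{t,t'}(u_t) = v_{t'}. Let ℓ ≤ k and let (x_1, y_1), ..., (x_ℓ, y_ℓ) be designated pairs of vertices of T_1^{(s,k,m)} × T_2^{(s,k,m)} such that: (IH1) each x_i lies in the union of the subtrees at u_1, ..., u_{m+1} and each y_i lies in the union of the subtrees at v_1, ..., v_m; (IH2) for i ≠ j, x_i and x_j lie in the same subtree at some u_t if and only if y_i and y_j lie in the same subtree at some v_{t'}; (IH3) for each i, if x_i lies in the subtree at u_t and y_i in the subtree at v_{t'}, then y_i = φ_{t,t'}(x_i). Then, setting x_0 and y_0 to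 be the two roots, Duplicator wins ehr[T_1^{(s,k,m)}, T_2^{(s,k,m)}, s; k] with Spoiler starting on T_2^{(s,k,m)}, with the winning conditions (Main 1) and (Main 2) required to hold over all played pairs together with the ℓ+1 designated pairs. -/

import Mathlib

/-! ## Rooted trees -/

/-- A rooted tree structure: a vertex type, a root, and a parent map
(`parent v = none` is intended to hold exactly when `v` is the root). -/
structure RTree where
  V : Type
  root : V
  parent : V → Option V

namespace RTree

/-- Iterate the parent map `n` times. -/
def parentIter (T : RTree) : ℕ → T.V → Option T.V
  | 0, v => some v
  | n + 1, v => (T.parent v).bind (T.parentIter n)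

/-- `u` is a descendant of `v` (possibly `u = v`). -/
def IsDesc (T : RTree) (v u : T.V) : Prop :=
  ∃ n, T.parentIter n u = some v

/-- The structure is a genuine rooted, locally finite tree:
exactly the root has no parent, every vertex reaches the root by iterating
the parent map (connectivity and acyclicity), and every vertex has finitely
many children (local finiteness). -/
def IsTree (T : RTree) : Prop :=
  (∀ v, T.parent v = none ↔ v = T.root) ∧
  (∀ v, ∃ n, T.parentIter n v = some T.root) ∧
  (∀ v, {u | T.parent u = some v}.Finite)

open Classical in
/-- The subtree `T(v)` consisting of `v` and all its descendants, rooted at `v`. -/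
noncomputable def subtree (T : RTree) (v : T.V) : RTree where
  V := {u : T.V // T.IsDesc v u}
  root := ⟨v, 0, rfl⟩
  parent u :=
    if u.1 = v then none
    else (T.parent u.1).bind fun w =>
      if h : T.IsDesc v w then some ⟨w, h⟩ else none

end RTree

/-- An isomorphism of rooted trees: a bijection of vertices mapping root to
root and commuting with the parent maps. -/
structure TreeIso (S T : RTree) where
  toEquiv : S.V ≃ T.V
  map_root : toEquiv S.root = T.root
  map_parent : ∀ v, (S.parent v).map toEquiv = T.parent (toEquiv v)

/-! ## First-order logic of rooted trees -/

/-- Terms: variables (de Bruijn indices) and the constant `R` for the root. -/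
inductive FOTerm where
  | var : ℕ → FOTerm
  | root : FOTerm
deriving DecidableEq

/-- First-order formulas in the language of rooted trees: equality `x = y`,
the parent relation `parentOf t t'` (meaning `π(t') = t`, i.e. `t` is the
parent of `t'`), Boolean connectives, and quantifiers (de Bruijn style). -/
inductive FOFormula where
  | eq : FOTerm → FOTerm → FOFormula
  | parentOf : FOTerm → FOTerm → FOFormula
  | not : FOFormula → FOFormula
  | and : FOFormula → FOFormula → FOFormula
  | or : FOFormula → FOFormula → FOFormula
  | imp : FOFormula → FOFormula → FOFormula
  | all : FOFormula → FOFormula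
  | ex : FOFormula → FOFormula
deriving DecidableEq

namespace FOTerm

def eval (T : RTree) (env : ℕ → T.V) : FOTerm → T.V
  | var n => env n
  | root => T.root

def freeBound : FOTerm → ℕ
  | var n => n + 1
  | root => 0

end FOTerm

/-- Kinds of quantifiers, used to count alternations. -/
inductive QKind where
  | ex | all
deriving DecidableEq

/-- The dual of a quantifier kind. -/
def QKind.dual : QKind → QKind
  | .ex => .all
  | .all => .ex

namespace FOFormula

/-- Satisfaction of a formula in a rooted tree under an environment. -/
def Sat (T : RTree) : FOFormula → (ℕ → T.V) → Prop
  | eq t₁ t₂, env => t₁.eval T env = t₂.eval T env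
  | parentOf t₁ t₂, env => T.parent (t₂.eval T env) = some (t₁.eval T env)
  | not φ, env => ¬ φ.Sat T env
  | and φ ψ, env => φ.Sat T env ∧ ψ.Sat T env
  | or φ ψ, env => φ.Sat T env ∨ ψ.Sat T env
  | imp φ ψ, env => φ.Sat T env → ψ.Sat T env
  | all φ, env => ∀ w : T.V, φ.Sat T (fun n => match n with | 0 => w | Nat.succ k => env k)
  | ex φ, env => ∃ w : T.V, φ.Sat T (fun n => match n with | 0 => w | Nat.succ k => env k)

/-- Quantifier depth: the maximum number of nested quantifiers. -/
def qd : FOFormula → ℕ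
  | eq _ _ => 0
  | parentOf _ _ => 0
  | not φ => φ.qd
  | and φ ψ => max φ.qd ψ.qd
  | or φ ψ => max φ.qd ψ.qd
  | imp φ ψ => max φ.qd ψ.qd
  | all φ => φ.qd + 1
  | ex φ => φ.qd + 1

/-- Auxiliary alternation count: `aqdAux φ pol q` is the maximum number of
alternations between (effectively) existential and universal quantifiers along
a nested quantifier sequence of `φ`, given the current polarity `pol`
(`true` = positive; negations and antecedents of implications flip it, so that
e.g. a `∀` under a negation counts as an `∃`) and the effective kind `q` of
the innermost enclosing quantifier (if any). -/
def aqdAux : FOFormula → Bool → Option QKind → ℕ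
  | eq _ _, _, _ => 0
  | parentOf _ _, _, _ => 0
  | not φ, pol, q => φ.aqdAux (!pol) q
  | and φ ψ, pol, q => max (φ.aqdAux pol q) (ψ.aqdAux pol q)
  | or φ ψ, pol, q => max (φ.aqdAux pol q) (ψ.aqdAux pol q)
  | imp φ ψ, pol, q => max (φ.aqdAux (!pol) q) (ψ.aqdAux pol q)
  | all φ, pol, q =>
      (if q = some (if pol then QKind.ex else QKind.all) then 1 else 0) +
        φ.aqdAux pol (some (if pol then QKind.all else QKind.ex))
  | ex φ, pol, q =>
      (if q = some (if pol then QKind.all else QKind.ex) then 1 else 0) +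
        φ.aqdAux pol (some (if pol then QKind.ex else QKind.all))

/-- The number of alternations of quantifiers of a formula: the maximum number
of switches between (effectively) existential and universal quantifiers in a
nested quantifier sequence.  Purely existential or purely universal formulas
have `aqd = 0`. -/
def aqd (φ : FOFormula) : ℕ := φ.aqdAux true none

/-- A bound on the free variables of a formula: all free de Bruijn indices
are `< freeBound`. -/
def freeBound : FOFormula → ℕ
  | eq t₁ t₂ => max t₁.freeBound t₂.freeBound
  | parentOf t₁ t₂ => max t₁.freeBound t₂.freeBound
  | not φ => φ.freeBound
  | and φ ψ => max φ.freeBound ψ.freeBound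
  | or φ ψ => max φ.freeBound ψ.freeBound
  | imp φ ψ => max φ.freeBound ψ.freeBound
  | all φ => φ.freeBound - 1
  | ex φ => φ.freeBound - 1

/-- A sentence is a formula with no free variables. -/
def IsSentence (φ : FOFormula) : Prop := φ.freeBound = 0

end FOFormula

/-- A (closed) formula holds in a rooted tree. -/
def Models (T : RTree) (φ : FOFormula) : Prop :=
  φ.Sat T (fun _ => T.root)

/-- The formula `P_i(x)`, with free variable `x` being de Bruijn index `0`:
`P_0(x) = ∀ y ¬(π(y) = x)` and `P_{i+1}(x) = ∀ y (π(y) = x → ¬ P_i(y))`. -/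
def Pform : ℕ → FOFormula
  | 0 => .all (.not (.parentOf (.var 1) (.var 0)))
  | i + 1 => .all (.imp (.parentOf (.var 1) (.var 0)) (.not (Pform i)))

/-- The sentence `KEIN_i = P_i(R)`. -/
def KEIN : ℕ → FOFormula
  | 0 => .all (.not (.parentOf .root (.var 0)))
  | i + 1 => .all (.imp (.parentOf .root (.var 0)) (.not (Pform i)))

/-! ## Ehrenfeucht games -/

/-- The winning condition for Duplicator: for all pairs `(x_i, y_i)`, `(x_j, y_j)`
in the list of selected/designated pairs, (Main 1) `π(x_j) = x_i ↔ π(y_j) = y_i`,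
and (Main 2) `x_i = x_j ↔ y_i = y_j`. -/
def GoodPairs (T₁ T₂ : RTree) (ps : List (T₁.V × T₂.V)) : Prop :=
  ∀ p ∈ ps, ∀ q ∈ ps,
    (T₁.parent p.1 = some q.1 ↔ T₂.parent p.2 = some q.2) ∧
    (p.1 = q.1 ↔ p.2 = q.2)

/-- Duplicator wins the scheduled Ehrenfeucht game on `T₁, T₂` in which Spoiler
must play his moves in consecutive batches, the batch sizes given by the list
`sched`, switching trees after each batch; `side = true` means Spoiler currently
plays on `T₁` (Duplicator answering on `T₂`), `side = false` means Spoiler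
currently plays on `T₂`.  The list `ps` records the pairs selected so far
(including designated pairs and the pair of roots); Duplicator wins when the
final configuration satisfies `GoodPairs`. -/
def DupWinsSched (T₁ T₂ : RTree) : List ℕ → Bool → List (T₁.V × T₂.V) → Prop
  | [], _, ps => GoodPairs T₁ T₂ ps
  | 0 :: rest, side, ps => DupWinsSched T₁ T₂ rest (!side) ps
  | (n + 1) :: rest, side, ps =>
      if side then
        ∀ x : T₁.V, ∃ y : T₂.V, DupWinsSched T₁ T₂ (n :: rest) side ((x, y) :: ps)
      else
        ∀ y : T₂.V, ∃ x : T₁.V, DupWinsSched T₁ T₂ (n :: rest) side ((x, y) :: ps)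
termination_by sched _ _ => (sched.length, sched.sum)
decreasing_by
  all_goals
    first
      | exact Prod.Lex.left _ _ (Nat.lt_succ_self _)
      | exact Prod.Lex.right _ (by simp [List.sum_cons])

/-- The cost (in switches) for Spoiler of playing on side `side` when his
previous move (if any) was on side `last`. -/
def switchCost (last : Option Bool) (side : Bool) : ℕ :=
  match last with
  | none => 0
  | some b => if b = side then 0 else 1

/-- Duplicator wins the Ehrenfeucht game `EHR` with `rounds` remaining rounds,
`sw` remaining switches allowed to Spoiler, `last` the side on which Spoiler
made his previous move (if any), and `ps` the pairs selected so far.  In each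
round Spoiler picks a side (paying a switch if he changes trees, which he may
do only if he has switches left) and a vertex in that tree, and Duplicator
answers in the other tree. -/
def DupWinsEHRAux (T₁ T₂ : RTree) :
    ℕ → ℕ → Option Bool → List (T₁.V × T₂.V) → Prop
  | 0, _, _, ps => GoodPairs T₁ T₂ ps
  | r + 1, sw, last, ps =>
      ∀ side : Bool, switchCost last side ≤ sw →
        if side then
          ∀ x : T₁.V, ∃ y : T₂.V,
            DupWinsEHRAux T₁ T₂ r (sw - switchCost last side) (some side) ((x, y) :: ps)
        else
          ∀ y : T₂.V, ∃ x : T₁.V,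
            DupWinsEHRAux T₁ T₂ r (sw - switchCost last side) (some side) ((x, y) :: ps)

/-- Duplicator wins the game `EHR[T₁, T₂, s, r]`: `r` rounds, Spoiler may start
on either tree and make at most `s` switches. -/
def DupWinsEHR (T₁ T₂ : RTree) (s r : ℕ) : Prop :=
  DupWinsEHRAux T₁ T₂ r s none [(T₁.root, T₂.root)]

/-! ## The trees `T₁^{(s,k,m)}` and `T₂^{(s,k,m)}` -/

/-- The one-vertex rooted tree. -/
def single : RTree where
  V := PUnit
  root := PUnit.unit
  parent := fun _ => none

/-- Hang the trees `f 0, …, f (n-1)` from a new root: the root of each `f i`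
becomes a child of the new root. -/
def hang (n : ℕ) (f : Fin n → RTree) : RTree where
  V := Unit ⊕ (Σ i : Fin n, (f i).V)
  root := Sum.inl ()
  parent := fun x =>
    match x with
    | Sum.inl _ => none
    | Sum.inr ⟨i, w⟩ =>
      match (f i).parent w with
      | none => some (Sum.inl ())
      | some w' => some (Sum.inr ⟨i, w'⟩)

/-- The pair of trees `(T₁^{(s,k,m)}, T₂^{(s,k,m)})`, indexed by `s` (the
parameter `k` plays no role in the construction).  Conventions for `s = 0`:
`T₁^{(0)}` is a single vertex and `T₂^{(0)}` is a star of `m` childless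
children.  For `s ≥ 1`: in `T₁^{(s+1)}` the root has `m+1` children, from each
of which hangs a copy of `T₂^{(s)}`; in `T₂^{(s+1)}` the root has `m+1`
children, from `m` of which hangs a copy of `T₂^{(s)}` and from the remaining
one hangs a copy of `T₁^{(s)}`. -/
def TreePair (m : ℕ) : ℕ → RTree × RTree
  | 0 => (single, hang m fun _ => single)
  | s + 1 =>
      (hang (m + 1) fun _ => (TreePair m s).2,
       hang (m + 1) fun i => if i.1 = m then (TreePair m s).1 else (TreePair m s).2)

/-- The tree `T₁^{(s,k,m)}`. -/
def Tree1 (s k m : ℕ) : RTree := (TreePair m s).1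

/-- The tree `T₂^{(s,k,m)}`. -/
def Tree2 (s k m : ℕ) : RTree := (TreePair m s).2

/-!
Duplicator keeps the subtrees at the children of the two roots linked by a partial bijection: a
pair of subtrees is linked once a selected pair of vertices lies in it, and on each linked pair he
follows a winning strategy of the game played on that pair alone. When Spoiler enters an unlinked
subtree, Duplicator links it to an unlinked subtree of the other tree, if possible to one of
the `m` copies of `T₂^{(s-1)}` in `T₂^{(s)}`, which are isomorphic to the subtrees of
`T₁^{(s)}`; there he copies Spoiler's moves along the isomorphism, as (IH3) does for the
designated pairs. The remaining subtree is the copy of `T₁^{(s-1)}`. Playing on `T₁^{(s)}`,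
Spoiler forces Duplicator into it only once all `m ≥ s·k` other copies are linked; as each round
links at most one new pair and the designated pairs at most `k`, Spoiler is then in his last
batch.

The games on pairs of subtrees involving the copy of `T₁^{(s-1)}` are games on `T₁^{(s-1)}` and
`T₂^{(s-1)}` with the two trees exchanged. So the induction on `s` proves that Duplicator wins
on `T₁^{(s)}, T₂^{(s)}` both when Spoiler starts on `T₂^{(s)}` with `s` batches and when he
starts on `T₁^{(s)}` with `s + 1` batches, provided `2k ≤ m`.
-/

/-! ### Descendants in rooted trees -/

namespace RTree

variable {T : RTree}

theorem parentIter_succ (n : ℕ) (v : T.V) :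
    T.parentIter (n + 1) v = (T.parent v).bind (T.parentIter n) := rfl

theorem isDesc_refl (v : T.V) : T.IsDesc v v := ⟨0, rfl⟩

theorem IsDesc.of_parent {c w z : T.V} (hz : T.parent z = some w) (hw : T.IsDesc c w) :
    T.IsDesc c z := by
  obtain ⟨n, hn⟩ := hw
  exact ⟨n + 1, by rw [parentIter_succ, hz, Option.bind_some, hn]⟩

theorem IsDesc.induction_on {c z : T.V} {P : T.V → Prop} (h : T.IsDesc c z) (base : P c)
    (step : ∀ z w, T.parent z = some w → T.IsDesc c w → P w → P z) : P z := by
  obtain ⟨n, hn⟩ := h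
  induction n generalizing z with
  | zero => obtain rfl := Option.some.inj hn; exact base
  | succ n ih =>
    cases hz : T.parent z with
    | none => simp [parentIter_succ, hz] at hn
    | some w =>
      have hw : T.parentIter n w = some c := by simpa [parentIter_succ, hz] using hn
      exact step z w hz ⟨n, hw⟩ (ih hw)

theorem IsDesc.exists_parent {c z : T.V} (h : T.IsDesc c z) (hne : z ≠ c) :
    ∃ w, T.parent z = some w ∧ T.IsDesc c w :=
  h.induction_on (P := fun z => z ≠ c → ∃ w, T.parent z = some w ∧ T.IsDesc c w)
    (fun h => absurd rfl h) (fun _ w hzw hw _ _ => ⟨w, hzw, hw⟩) hne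

theorem IsDesc.trans {c w z : T.V} (hcw : T.IsDesc c w) (hwz : T.IsDesc w z) : T.IsDesc c z :=
  hwz.induction_on hcw fun _ _ hzw _ h => h.of_parent hzw

theorem IsDesc.mem_of_mem {S : Set T.V} (hS : ∀ z w, T.parent z = some w → z ∈ S → w ∈ S)
    {c z : T.V} (h : T.IsDesc c z) (hz : z ∈ S) : c ∈ S :=
  h.induction_on (P := fun z => z ∈ S → c ∈ S) id (fun z w hzw _ h hz => h (hS z w hzw hz)) hz

section ChildOfRoot

variable (hroot : T.parent T.root = none) {c : T.V} (hc : T.parent c = some T.root)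
include hroot hc

theorem not_isDesc_root : ¬ T.IsDesc c T.root := by
  intro h
  have : c ∈ ({T.root} : Set T.V) :=
    h.mem_of_mem (fun z w hzw hz => by simp_all) rfl
  simp_all

theorem ne_root_of_isDesc {x : T.V} (h : T.IsDesc c x) : x ≠ T.root := by
  rintro rfl
  exact not_isDesc_root hroot hc h

theorem parent_eq_root_iff {x : T.V} (h : T.IsDesc c x) : T.parent x = some T.root ↔ x = c := by
  refine ⟨fun hx => by_contra fun hne => ?_, fun hx => hx ▸ hc⟩
  obtain ⟨w, hw, hcw⟩ := h.exists_parent hne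
  rw [hx, Option.some.injEq] at hw
  exact not_isDesc_root hroot hc (hw ▸ hcw)

/-- The descendants of `c'` together with the root form an upward closed set. -/
theorem eq_of_isDesc {c' x : T.V} (hc' : T.parent c' = some T.root)
    (h : T.IsDesc c x) (h' : T.IsDesc c' x) : c = c' := by
  have hS : ∀ z w, T.parent z = some w → z ∈ {z | T.IsDesc c' z ∨ z = T.root} →
      w ∈ {z | T.IsDesc c' z ∨ z = T.root} := by
    rintro z w hzw (hz | rfl)
    · by_cases hzc : z = c'
      · subst hzc; rw [hc'] at hzw; exact Or.inr (Option.some.inj hzw).symm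
      · obtain ⟨w', hw', hcw'⟩ := hz.exists_parent hzc
        rw [hzw, Option.some.injEq] at hw'
        exact Or.inl (hw' ▸ hcw')
    · simp [hroot] at hzw
  rcases h.mem_of_mem hS (Or.inl h') with hcc' | hcr
  · by_contra hne
    obtain ⟨w, hw, hc'w⟩ := hcc'.exists_parent hne
    rw [hc, Option.some.injEq] at hw
    exact not_isDesc_root hroot hc' (hw ▸ hc'w)
  · simp [hcr, hroot] at hc

theorem parent_ne_of_isDesc {c' x z : T.V} (hc' : T.parent c' = some T.root) (hne : c ≠ c')
    (hx : T.IsDesc c x) (hz : T.IsDesc c' z) : T.parent x ≠ some z := by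
  intro hxz
  by_cases hxc : x = c
  · rw [hxc, hc, Option.some.injEq] at hxz
    exact ne_root_of_isDesc hroot hc' hz hxz.symm
  · obtain ⟨w, hw, hcw⟩ := hx.exists_parent hxc
    rw [hxz, Option.some.injEq] at hw
    exact hne (eq_of_isDesc hroot hc hc' (hw ▸ hcw) hz)

theorem subtree_parent_eq_iff {x z : T.V} (hx : T.IsDesc c x) (hz : T.IsDesc c z) :
    (T.subtree c).parent ⟨x, hx⟩ = some ⟨z, hz⟩ ↔ T.parent x = some z := by
  by_cases hxc : x = c
  · subst hxc
    simp only [subtree, ↓reduceIte, reduceCtorEq, false_iff, hc, Option.some.injEq]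
    exact fun h => ne_root_of_isDesc hroot hc hz h.symm
  · obtain ⟨w, hw, hcw⟩ := hx.exists_parent hxc
    simp only [subtree, if_neg hxc, hw, Option.bind_some, dif_pos hcw, Option.some.injEq,
      Subtype.mk.injEq]

end ChildOfRoot

theorem subtree_mk_eq_mk_iff {c x z : T.V} (hx : T.IsDesc c x) (hz : T.IsDesc c z) :
    (⟨x, hx⟩ : (T.subtree c).V) = ⟨z, hz⟩ ↔ x = z :=
  ⟨congrArg Subtype.val, fun h => by subst h; rfl⟩

theorem subtree_parent_root (c : T.V) : (T.subtree c).parent (T.subtree c).root = none := by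
  simp [subtree]

structure IsRooted (T : RTree) : Prop where
  parent_eq_none_iff : ∀ v, T.parent v = none ↔ v = T.root
  isDesc_root : ∀ v, T.IsDesc T.root v

theorem IsRooted.parent_root (hT : T.IsRooted) : T.parent T.root = none :=
  (hT.parent_eq_none_iff _).2 rfl

theorem IsRooted.exists_child_isDesc (hT : T.IsRooted) {x : T.V} (hx : x ≠ T.root) :
    ∃ c, T.parent c = some T.root ∧ T.IsDesc c x :=
  (hT.isDesc_root x).induction_on
    (P := fun x => x ≠ T.root → ∃ c, T.parent c = some T.root ∧ T.IsDesc c x)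
    (fun h => absurd rfl h)
    (fun x w hxw _ ih _ => by
      by_cases hw : w = T.root
      · exact ⟨x, hw ▸ hxw, isDesc_refl x⟩
      · obtain ⟨c, hc, hcw⟩ := ih hw
        exact ⟨c, hc, hcw.of_parent hxw⟩) hx

structure EnumRootChildren (T : RTree) {n : ℕ} (u : Fin n → T.V) : Prop where
  parent_eq : ∀ t, T.parent (u t) = some T.root
  injective : Function.Injective u
  exists_eq : ∀ w, T.parent w = some T.root → ∃ t, w = u t

namespace EnumRootChildren

variable {n : ℕ} {u : Fin n → T.V} (hu : T.EnumRootChildren u)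
include hu

theorem exists_isDesc (hT : T.IsRooted) {x : T.V} (hx : x ≠ T.root) :
    ∃ t, T.IsDesc (u t) x := by
  obtain ⟨c, hc, hcx⟩ := hT.exists_child_isDesc hx
  obtain ⟨t, rfl⟩ := hu.exists_eq c hc
  exact ⟨t, hcx⟩

theorem eq_of_isDesc (hroot : T.parent T.root = none) {t₁ t₂ : Fin n} {x : T.V}
    (h₁ : T.IsDesc (u t₁) x) (h₂ : T.IsDesc (u t₂) x) : t₁ = t₂ :=
  hu.injective (RTree.eq_of_isDesc hroot (hu.parent_eq t₁) (hu.parent_eq t₂) h₁ h₂)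

end EnumRootChildren

end RTree

/-! ### Isomorphisms and strategies -/

namespace TreeIso

variable {S T U : RTree}

def refl (S : RTree) : TreeIso S S :=
  ⟨Equiv.refl _, rfl, fun _ => Option.map_id'⟩

def ofEq (h : S = T) : TreeIso S T := h ▸ refl S

def symm (e : TreeIso S T) : TreeIso T S where
  toEquiv := e.toEquiv.symm
  map_root := by rw [← e.map_root, Equiv.symm_apply_apply]
  map_parent v := by
    rw [← Equiv.apply_symm_apply e.toEquiv v, ← e.map_parent, Option.map_map,
      Equiv.symm_apply_apply, Equiv.symm_comp_self, Option.map_id, id]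

def trans (e : TreeIso S T) (f : TreeIso T U) : TreeIso S U where
  toEquiv := e.toEquiv.trans f.toEquiv
  map_root := by rw [Equiv.trans_apply, e.map_root, f.map_root]
  map_parent v := by
    rw [Equiv.trans_apply, ← f.map_parent, ← e.map_parent, Option.map_map]
    rfl

theorem parent_eq_some_iff (e : TreeIso S T) {a b : S.V} :
    T.parent (e.toEquiv a) = some (e.toEquiv b) ↔ S.parent a = some b := by
  rw [← e.map_parent, Option.map_eq_some_iff]
  exact ⟨fun ⟨c, hc, hcb⟩ => e.toEquiv.injective hcb ▸ hc, fun h => ⟨b, h, rfl⟩⟩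

end TreeIso

section Games

variable {T₁ T₂ T₁' T₂' : RTree}

theorem GoodPairs.mono {ps qs : List (T₁.V × T₂.V)} (h : qs ⊆ ps)
    (H : GoodPairs T₁ T₂ ps) : GoodPairs T₁ T₂ qs :=
  fun p hp q hq => H p (h hp) q (h hq)

theorem dupWinsSched_nil {side : Bool} {ps : List (T₁.V × T₂.V)} :
    DupWinsSched T₁ T₂ [] side ps ↔ GoodPairs T₁ T₂ ps := by
  rw [DupWinsSched]

theorem dupWinsSched_zero_cons {rest : List ℕ} {side : Bool} {ps : List (T₁.V × T₂.V)} :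
    DupWinsSched T₁ T₂ (0 :: rest) side ps ↔ DupWinsSched T₁ T₂ rest (!side) ps := by
  rw [DupWinsSched]

theorem dupWinsSched_succ_cons_true {n : ℕ} {rest : List ℕ} {ps : List (T₁.V × T₂.V)} :
    DupWinsSched T₁ T₂ ((n + 1) :: rest) true ps ↔
      ∀ x, ∃ y, DupWinsSched T₁ T₂ (n :: rest) true ((x, y) :: ps) := by
  rw [DupWinsSched]; rfl

theorem dupWinsSched_succ_cons_false {n : ℕ} {rest : List ℕ} {ps : List (T₁.V × T₂.V)} :
    DupWinsSched T₁ T₂ ((n + 1) :: rest) false ps ↔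
      ∀ y, ∃ x, DupWinsSched T₁ T₂ (n :: rest) false ((x, y) :: ps) := by
  rw [DupWinsSched]; rfl

namespace DupWinsSched

theorem mono {sched : List ℕ} {side : Bool} {ps qs : List (T₁.V × T₂.V)} (h : qs ⊆ ps)
    (H : DupWinsSched T₁ T₂ sched side ps) : DupWinsSched T₁ T₂ sched side qs := by
  induction sched, side, ps using DupWinsSched.induct generalizing qs with
  | case1 => rw [dupWinsSched_nil] at *; exact H.mono h
  | case2 rest side ps ih => rw [dupWinsSched_zero_cons] at *; exact ih h H
  | case3 n rest ps ih =>
    rw [dupWinsSched_succ_cons_true] at *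
    exact fun x => (H x).imp fun y hy => ih x y (List.cons_subset_cons _ h) hy
  | case4 n rest side ps hside ih =>
    rw [Bool.not_eq_true] at hside; subst hside
    rw [dupWinsSched_succ_cons_false] at *
    exact fun y => (H y).imp fun x hx => ih y x (List.cons_subset_cons _ h) hx

theorem goodPairs {sched : List ℕ} {side : Bool} {ps : List (T₁.V × T₂.V)}
    (H : DupWinsSched T₁ T₂ sched side ps) : GoodPairs T₁ T₂ ps := by
  induction sched, side, ps using DupWinsSched.induct with
  | case1 => rwa [dupWinsSched_nil] at H
  | case2 rest side ps ih => exact ih (dupWinsSched_zero_cons.1 H)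
  | case3 n rest ps ih =>
    obtain ⟨y, hy⟩ := dupWinsSched_succ_cons_true.1 H T₁.root
    exact (ih _ y hy).mono (List.subset_cons_self _ _)
  | case4 n rest side ps hside ih =>
    rw [Bool.not_eq_true] at hside; subst hside
    obtain ⟨x, hx⟩ := dupWinsSched_succ_cons_false.1 H T₂.root
    exact (ih _ x hx).mono (List.subset_cons_self _ _)

theorem of_succ {n : ℕ} {rest : List ℕ} {side : Bool} {ps : List (T₁.V × T₂.V)}
    (H : DupWinsSched T₁ T₂ ((n + 1) :: rest) side ps) :
    DupWinsSched T₁ T₂ (n :: rest) side ps := by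
  cases side
  · obtain ⟨x, hx⟩ := dupWinsSched_succ_cons_false.1 H T₂.root
    exact hx.mono (List.subset_cons_self _ _)
  · obtain ⟨y, hy⟩ := dupWinsSched_succ_cons_true.1 H T₁.root
    exact hy.mono (List.subset_cons_self _ _)

theorem swap {sched : List ℕ} {side : Bool} {ps : List (T₁.V × T₂.V)}
    (H : DupWinsSched T₁ T₂ sched side ps) :
    DupWinsSched T₂ T₁ sched (!side) (ps.map Prod.swap) := by
  induction sched, side, ps using DupWinsSched.induct with
  | case1 =>
    rw [dupWinsSched_nil] at *
    simp only [GoodPairs, List.mem_map, forall_exists_index, and_imp, forall_apply_eq_imp_iff₂]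
    exact fun p hp q hq => ⟨(H p hp q hq).1.symm, (H p hp q hq).2.symm⟩
  | case2 rest side ps ih => rw [dupWinsSched_zero_cons] at *; exact ih H
  | case3 n rest ps ih =>
    rw [dupWinsSched_succ_cons_true] at H
    rw [Bool.not_true, dupWinsSched_succ_cons_false]
    exact fun y => (H y).imp fun x hx => ih y x hx
  | case4 n rest side ps hside ih =>
    rw [Bool.not_eq_true] at hside; subst hside
    rw [dupWinsSched_succ_cons_false] at H
    rw [Bool.not_false, dupWinsSched_succ_cons_true]
    exact fun x => (H x).imp fun y hy => ih x y hy

end DupWinsSched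

theorem DupWinsSched.map_iso (e₁ : TreeIso T₁ T₁') (e₂ : TreeIso T₂ T₂')
    {sched : List ℕ} {side : Bool} {ps : List (T₁.V × T₂.V)}
    (H : DupWinsSched T₁ T₂ sched side ps) :
    DupWinsSched T₁' T₂' sched side (ps.map (Prod.map e₁.toEquiv e₂.toEquiv)) := by
  induction sched, side, ps using DupWinsSched.induct with
  | case1 =>
    rw [dupWinsSched_nil] at *
    simp only [GoodPairs, List.mem_map, forall_exists_index, and_imp, forall_apply_eq_imp_iff₂,
      Prod.map_fst, Prod.map_snd, TreeIso.parent_eq_some_iff, EmbeddingLike.apply_eq_iff_eq]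
    exact H
  | case2 rest side ps ih => rw [dupWinsSched_zero_cons] at *; exact ih H
  | case3 n rest ps ih =>
    rw [dupWinsSched_succ_cons_true] at *
    intro x
    obtain ⟨y, hy⟩ := H (e₁.toEquiv.symm x)
    exact ⟨e₂.toEquiv y, by simpa using ih _ y hy⟩
  | case4 n rest side ps hside ih =>
    rw [Bool.not_eq_true] at hside; subst hside
    rw [dupWinsSched_succ_cons_false] at *
    intro y
    obtain ⟨x, hx⟩ := H (e₂.toEquiv.symm y)
    exact ⟨e₁.toEquiv x, by simpa using ih _ x hx⟩

theorem dupWinsSched_of_iso (e : TreeIso T₁ T₂) {sched : List ℕ} {side : Bool}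
    {ps : List (T₁.V × T₂.V)} (hps : ∀ p ∈ ps, p.2 = e.toEquiv p.1) :
    DupWinsSched T₁ T₂ sched side ps := by
  induction sched, side, ps using DupWinsSched.induct with
  | case1 ps =>
    rw [dupWinsSched_nil]
    intro p hp q hq
    rw [hps p hp, hps q hq, e.parent_eq_some_iff, e.toEquiv.injective.eq_iff]
    exact ⟨Iff.rfl, Iff.rfl⟩
  | case2 rest side ps ih => rw [dupWinsSched_zero_cons]; exact ih hps
  | case3 n rest ps ih =>
    rw [dupWinsSched_succ_cons_true]
    exact fun x => ⟨e.toEquiv x, ih x _ (List.forall_mem_cons.2 ⟨rfl, hps⟩)⟩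
  | case4 n rest side ps hside ih =>
    rw [Bool.not_eq_true] at hside; subst hside
    rw [dupWinsSched_succ_cons_false]
    exact fun y => ⟨e.toEquiv.symm y, ih y _ (List.forall_mem_cons.2 ⟨by simp, hps⟩)⟩

end Games

/-! ### Hanging trees from a common root -/

section Hang

variable {n : ℕ} {f : Fin n → RTree}

def hangChild (f : Fin n → RTree) (i : Fin n) : (hang n f).V := Sum.inr ⟨i, (f i).root⟩

theorem hang_parent_inr_of_eq_none {i : Fin n} {w : (f i).V} (hw : (f i).parent w = none) :
    (hang n f).parent (Sum.inr ⟨i, w⟩) = some (hang n f).root := by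
  simp [hang, hw]

theorem hang_parent_inr_of_eq_some {i : Fin n} {w w' : (f i).V} (hw : (f i).parent w = some w') :
    (hang n f).parent (Sum.inr ⟨i, w⟩) = some (Sum.inr ⟨i, w'⟩) := by
  simp [hang, hw]

/-- The vertices outside the `i`-th hanging tree form an upward closed set. -/
theorem exists_eq_inr_of_isDesc_hangChild {i : Fin n} {z : (hang n f).V}
    (hz : (hang n f).IsDesc (hangChild f i) z) : ∃ w, z = Sum.inr ⟨i, w⟩ := by
  by_contra hout
  refine (hz.mem_of_mem (S := {z : (hang n f).V | ¬ ∃ w : (f i).V, z = Sum.inr ⟨i, w⟩}) ?_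
    hout) ⟨_, rfl⟩
  rintro (_ | ⟨j, w⟩) z' hzz' hz
  · simp [hang] at hzz'
  · have hji : j ≠ i := fun hji => hz ⟨hji ▸ w, by subst hji; rfl⟩
    cases hw : (f j).parent w with
    | none =>
      rw [hang_parent_inr_of_eq_none hw] at hzz'
      obtain rfl := Option.some.inj hzz'
      exact fun ⟨_, h⟩ => Sum.inl_ne_inr h
    | some w' =>
      rw [hang_parent_inr_of_eq_some hw] at hzz'
      obtain rfl := Option.some.inj hzz'
      rintro ⟨w'', hw''⟩
      exact hji (Sigma.mk.inj_iff.1 (Sum.inr.inj hw'')).1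

variable (hf : ∀ i, (f i).IsRooted)
include hf

theorem hang_parent_hangChild (i : Fin n) :
    (hang n f).parent (hangChild f i) = some (hang n f).root :=
  hang_parent_inr_of_eq_none (hf i).parent_root

theorem isDesc_hangChild_inr (i : Fin n) (w : (f i).V) :
    (hang n f).IsDesc (hangChild f i) (Sum.inr ⟨i, w⟩) :=
  ((hf i).isDesc_root w).induction_on
    (P := fun w => (hang n f).IsDesc (hangChild f i) (Sum.inr ⟨i, w⟩)) (RTree.isDesc_refl _)
    fun _ _ hw _ h => h.of_parent (hang_parent_inr_of_eq_some hw)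

theorem hang_isRooted : (hang n f).IsRooted where
  parent_eq_none_iff
    | Sum.inl () => by simp [hang]
    | Sum.inr ⟨i, w⟩ => by cases hw : (f i).parent w <;> simp [hang, hw]
  isDesc_root
    | Sum.inl () => RTree.isDesc_refl _
    | Sum.inr ⟨i, w⟩ => ((RTree.isDesc_refl _).of_parent (hang_parent_hangChild hf i)).trans
        (isDesc_hangChild_inr hf i w)

theorem hang_enumRootChildren : (hang n f).EnumRootChildren (hangChild f) where
  parent_eq := hang_parent_hangChild hf
  injective _ _ h := (Sigma.mk.inj_iff.1 (Sum.inr.inj h)).1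
  exists_eq
    | Sum.inl (), h => by simp [hang] at h
    | Sum.inr ⟨i, w⟩, h => by
      cases hw : (f i).parent w with
      | none => exact ⟨i, by rw [((hf i).parent_eq_none_iff w).1 hw]; rfl⟩
      | some w' => simp [hang, hw] at h

noncomputable def hangSubtreeIso (i : Fin n) :
    TreeIso (f i) ((hang n f).subtree (hangChild f i)) := by
  let g : (f i).V → ((hang n f).subtree (hangChild f i)).V :=
    fun w => ⟨Sum.inr ⟨i, w⟩, isDesc_hangChild_inr hf i w⟩
  have hg : Function.Bijective g := by
    refine ⟨fun w w' h => eq_of_heq (Sigma.mk.inj_iff.1 (Sum.inr.inj (congrArg Subtype.val h))).2,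
      fun ⟨z, hz⟩ => ?_⟩
    obtain ⟨w, rfl⟩ := exists_eq_inr_of_isDesc_hangChild hz
    exact ⟨w, rfl⟩
  refine ⟨Equiv.ofBijective g hg, rfl, fun w => ?_⟩
  cases hw : (f i).parent w with
  | none =>
    rw [((hf i).parent_eq_none_iff w).1 hw]
    exact (RTree.subtree_parent_root _).symm
  | some w' =>
    exact ((RTree.subtree_parent_eq_iff (hang_isRooted hf).parent_root
      (hang_parent_hangChild hf i) _ _).2 (hang_parent_inr_of_eq_some hw)).symm

end Hang

theorem single_isRooted : single.IsRooted :=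
  ⟨fun _ => iff_of_true rfl rfl, fun _ => RTree.isDesc_refl _⟩

theorem treePair_isRooted (m : ℕ) : ∀ r, (TreePair m r).1.IsRooted ∧ (TreePair m r).2.IsRooted
  | 0 => ⟨single_isRooted, hang_isRooted fun _ => single_isRooted⟩
  | r + 1 => by
    obtain ⟨h₁, h₂⟩ := treePair_isRooted m r
    exact ⟨hang_isRooted fun _ => h₂, hang_isRooted fun i => by split <;> assumption⟩

/-! ### Duplicator's strategy through linked subtrees -/

section Restrict

variable {A B : RTree}

open Classical in
/-- The pair of roots at the end stands for the designated pair `(x₀, y₀)` of the game on the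
two subtrees. -/
noncomputable def restrictPairs (a : A.V) (b : B.V) (ps : List (A.V × B.V)) :
    List ((A.subtree a).V × (B.subtree b).V) :=
  ps.filterMap (fun p => if h : A.IsDesc a p.1 ∧ B.IsDesc b p.2 then
      some (⟨p.1, h.1⟩, ⟨p.2, h.2⟩) else none) ++
    [((A.subtree a).root, (B.subtree b).root)]

variable {a : A.V} {b : B.V} {ps : List (A.V × B.V)}

theorem restrictPairs_cons_of_isDesc {x : A.V} {y : B.V} (hx : A.IsDesc a x) (hy : B.IsDesc b y) :
    restrictPairs a b ((x, y) :: ps) = (⟨x, hx⟩, ⟨y, hy⟩) :: restrictPairs a b ps := by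
  simp only [restrictPairs, List.filterMap_cons, dif_pos (And.intro hx hy), List.cons_append]

theorem restrictPairs_cons_of_not {x : A.V} {y : B.V} (h : ¬ (A.IsDesc a x ∧ B.IsDesc b y)) :
    restrictPairs a b ((x, y) :: ps) = restrictPairs a b ps := by
  simp only [restrictPairs, List.filterMap_cons, dif_neg h]

theorem restrictPairs_eq_singleton (h : ∀ p ∈ ps, ¬ (A.IsDesc a p.1 ∧ B.IsDesc b p.2)) :
    restrictPairs a b ps = [((A.subtree a).root, (B.subtree b).root)] := by
  simpa [restrictPairs, List.filterMap_eq_nil_iff] using h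

theorem mem_restrictPairs {p : A.V × B.V} (hp : p ∈ ps) (h₁ : A.IsDesc a p.1)
    (h₂ : B.IsDesc b p.2) :
    ((⟨p.1, h₁⟩, ⟨p.2, h₂⟩) : (A.subtree a).V × (B.subtree b).V) ∈
      restrictPairs a b ps :=
  List.mem_append_left _ (List.mem_filterMap.2 ⟨p, hp, dif_pos ⟨h₁, h₂⟩⟩)

theorem roots_mem_restrictPairs :
    ((A.subtree a).root, (B.subtree b).root) ∈ restrictPairs a b ps :=
  List.mem_append_right _ (List.mem_singleton_self _)

theorem eq_roots_or_mem_of_mem_restrictPairs {q : (A.subtree a).V × (B.subtree b).V}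
    (hq : q ∈ restrictPairs a b ps) :
    q = ((A.subtree a).root, (B.subtree b).root) ∨ (q.1.1, q.2.1) ∈ ps := by
  rcases List.mem_append.1 hq with hq | hq
  · obtain ⟨p, hp, hpq⟩ := List.mem_filterMap.1 hq
    split_ifs at hpq
    obtain rfl := Option.some.inj hpq
    exact Or.inr hp
  · exact Or.inl (List.mem_singleton.1 hq)

end Restrict

namespace SubtreeMatching

section Matching

variable {A B : RTree} {m : ℕ} (u : Fin (m + 1) → A.V) (v : Fin (m + 1) → B.V)

def Linked (ps : List (A.V × B.V)) (t t' : Fin (m + 1)) : Prop :=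
  ∃ p ∈ ps, A.IsDesc (u t) p.1 ∧ B.IsDesc (v t') p.2

open Classical in
noncomputable def occupied (ps : List (A.V × B.V)) : Finset (Fin (m + 1)) :=
  Finset.univ.filter fun t => ∃ t', Linked u v ps t t'

/-- Duplicator's invariant: the selected pairs link the subtrees at the `u t` to those at the
`v t'` by a partial bijection, and Duplicator wins the rest of the game on each linked pair. -/
structure Invariant (bud : ℕ) (sched : List ℕ) (side : Bool) (ps : List (A.V × B.V)) :
    Prop where
  cover : ∀ p ∈ ps, p = (A.root, B.root) ∨
    ∃ t t', A.IsDesc (u t) p.1 ∧ B.IsDesc (v t') p.2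
  linked_iff : ∀ t₁ t₁' t₂ t₂', Linked u v ps t₁ t₁' → Linked u v ps t₂ t₂' →
    (t₁ = t₂ ↔ t₁' = t₂')
  wins : ∀ t t', Linked u v ps t t' →
    DupWinsSched (A.subtree (u t)) (B.subtree (v t')) sched side (restrictPairs (u t) (v t') ps)
  card_le : (occupied u v ps).card + sched.sum ≤ bud

variable {u v}

theorem linked_cons {x : A.V} {y : B.V} {ps : List (A.V × B.V)} {t t' : Fin (m + 1)} :
    Linked u v ((x, y) :: ps) t t' ↔
      (A.IsDesc (u t) x ∧ B.IsDesc (v t') y) ∨ Linked u v ps t t' := by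
  simp only [Linked, List.mem_cons, exists_eq_or_imp]

theorem mem_occupied {ps : List (A.V × B.V)} {t : Fin (m + 1)} :
    t ∈ occupied u v ps ↔ ∃ t', Linked u v ps t t' := by
  simp [occupied]

theorem restrictPairs_eq_singleton_of_not_linked {ps : List (A.V × B.V)} {t t' : Fin (m + 1)}
    (h : ¬ Linked u v ps t t') :
    restrictPairs (u t) (v t') ps = [((A.subtree (u t)).root, (B.subtree (v t')).root)] :=
  restrictPairs_eq_singleton fun p hp hp' => h ⟨p, hp, hp'⟩

variable (hA : A.parent A.root = none) (hB : B.parent B.root = none)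
  (hu : A.EnumRootChildren u) (hv : B.EnumRootChildren v)
  {bud : ℕ} {sched rest : List ℕ} {side : Bool} {ps : List (A.V × B.V)}

namespace Invariant

include hA hB hu hv in
theorem goodPairs (hI : Invariant u v bud sched side ps) : GoodPairs A B ps := by
  have inner {p} (hp : p ∈ ps) {t t'} (hpx : A.IsDesc (u t) p.1) (hpy : B.IsDesc (v t') p.2) :=
    (hI.wins t t' ⟨p, hp, hpx, hpy⟩).goodPairs _ (mem_restrictPairs hp hpx hpy)
  intro p hp q hq
  rcases hI.cover p hp with rfl | ⟨t₁, t₁', hpx, hpy⟩ <;>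
    rcases hI.cover q hq with rfl | ⟨t₂, t₂', hqx, hqy⟩
  · simp [hA, hB]
  · simp only [hA, hB, reduceCtorEq, iff_self, true_and]
    exact iff_of_false (fun h => RTree.ne_root_of_isDesc hA (hu.parent_eq t₂) hqx h.symm)
      (fun h => RTree.ne_root_of_isDesc hB (hv.parent_eq t₂') hqy h.symm)
  · have h := (inner hp hpx hpy) _ roots_mem_restrictPairs
    rw [RTree.parent_eq_root_iff hA (hu.parent_eq t₁) hpx,
      RTree.parent_eq_root_iff hB (hv.parent_eq t₁') hpy]
    refine ⟨?_, iff_of_false (RTree.ne_root_of_isDesc hA (hu.parent_eq t₁) hpx)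
      (RTree.ne_root_of_isDesc hB (hv.parent_eq t₁') hpy)⟩
    exact (RTree.subtree_mk_eq_mk_iff hpx (RTree.isDesc_refl _)).symm.trans
      (h.2.trans (RTree.subtree_mk_eq_mk_iff hpy (RTree.isDesc_refl _)))
  · by_cases ht : t₁ = t₂
    · subst ht
      obtain rfl := (hI.linked_iff _ _ _ _ ⟨p, hp, hpx, hpy⟩ ⟨q, hq, hqx, hqy⟩).1 rfl
      have h := (inner hp hpx hpy) _ (mem_restrictPairs hq hqx hqy)
      rw [← RTree.subtree_parent_eq_iff hA (hu.parent_eq t₁) hpx hqx,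
        ← RTree.subtree_parent_eq_iff hB (hv.parent_eq t₁') hpy hqy]
      exact ⟨h.1, (RTree.subtree_mk_eq_mk_iff hpx hqx).symm.trans
        (h.2.trans (RTree.subtree_mk_eq_mk_iff hpy hqy))⟩
    · have ht' : t₁' ≠ t₂' := fun h =>
        ht ((hI.linked_iff _ _ _ _ ⟨p, hp, hpx, hpy⟩ ⟨q, hq, hqx, hqy⟩).2 h)
      refine ⟨iff_of_false ?_ ?_, iff_of_false ?_ ?_⟩
      · exact RTree.parent_ne_of_isDesc hA (hu.parent_eq t₁) (hu.parent_eq t₂)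
          (hu.injective.ne ht) hpx hqx
      · exact RTree.parent_ne_of_isDesc hB (hv.parent_eq t₁') (hv.parent_eq t₂')
          (hv.injective.ne ht') hpy hqy
      · exact fun h => ht (hu.eq_of_isDesc hA hpx (h ▸ hqx))
      · exact fun h => ht' (hv.eq_of_isDesc hB hpy (h ▸ hqy))

include hA hB hu hv in
theorem cons {n : ℕ} (hI : Invariant u v bud ((n + 1) :: rest) side ps) {t t' : Fin (m + 1)}
    {x : A.V} {y : B.V} (hx : A.IsDesc (u t) x) (hy : B.IsDesc (v t') y)
    (hlink : ∀ t₂ t₂', Linked u v ps t₂ t₂' → (t₂ = t ↔ t₂' = t'))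
    (hwin : DupWinsSched (A.subtree (u t)) (B.subtree (v t')) (n :: rest) side
      ((⟨x, hx⟩, ⟨y, hy⟩) :: restrictPairs (u t) (v t') ps)) :
    Invariant u v bud (n :: rest) side ((x, y) :: ps) := by
  have linked_new {t₁ t₁'} (h : Linked u v ((x, y) :: ps) t₁ t₁') :
      (t₁ = t ∧ t₁' = t') ∨ Linked u v ps t₁ t₁' :=
    (linked_cons.1 h).imp_left fun h => ⟨hu.eq_of_isDesc hA h.1 hx, hv.eq_of_isDesc hB h.2 hy⟩
  refine ⟨List.forall_mem_cons.2 ⟨Or.inr ⟨t, t', hx, hy⟩, hI.cover⟩, ?_, ?_, ?_⟩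
  · intro t₁ t₁' t₂ t₂' h₁ h₂
    rcases linked_new h₁ with ⟨rfl, rfl⟩ | h₁ <;>
      rcases linked_new h₂ with ⟨rfl, rfl⟩ | h₂
    · simp
    · simpa only [eq_comm] using hlink _ _ h₂
    · exact hlink _ _ h₁
    · exact hI.linked_iff _ _ _ _ h₁ h₂
  · intro t₁ t₁' h
    by_cases hxy : A.IsDesc (u t₁) x ∧ B.IsDesc (v t₁') y
    · obtain rfl := hu.eq_of_isDesc hA hxy.1 hx
      obtain rfl := hv.eq_of_isDesc hB hxy.2 hy
      rwa [restrictPairs_cons_of_isDesc hx hy]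
    · rw [restrictPairs_cons_of_not hxy]
      exact (hI.wins t₁ t₁' ((linked_cons.1 h).resolve_left hxy)).of_succ
  · have hsub : occupied u v ((x, y) :: ps) ⊆ insert t (occupied u v ps) := by
      intro t₁ ht₁
      obtain ⟨t₁', h⟩ := mem_occupied.1 ht₁
      rcases linked_new h with ⟨rfl, -⟩ | h
      · exact Finset.mem_insert_self _ _
      · exact Finset.mem_insert_of_mem (mem_occupied.2 ⟨t₁', h⟩)
    have := (Finset.card_le_card hsub).trans (Finset.card_insert_le _ _)
    have := hI.card_le
    simp only [List.sum_cons] at *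
    omega

include hA hu in
theorem cons_root {n : ℕ} (hI : Invariant u v bud ((n + 1) :: rest) side ps) :
    Invariant u v bud (n :: rest) side ((A.root, B.root) :: ps) := by
  have hnot (t t') : ¬ (A.IsDesc (u t) A.root ∧ B.IsDesc (v t') B.root) :=
    fun h => RTree.not_isDesc_root hA (hu.parent_eq t) h.1
  have hlinked (t t') : Linked u v ((A.root, B.root) :: ps) t t' ↔ Linked u v ps t t' :=
    linked_cons.trans (or_iff_right (hnot t t'))
  have hocc : occupied u v ((A.root, B.root) :: ps) = occupied u v ps := by
    ext t; simp only [mem_occupied, hlinked]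
  refine ⟨List.forall_mem_cons.2 ⟨Or.inl rfl, hI.cover⟩, ?_, fun t t' h => ?_, ?_⟩
  · simpa only [hlinked] using hI.linked_iff
  · rw [restrictPairs_cons_of_not (hnot t t')]
    exact (hI.wins t t' ((hlinked t t').1 h)).of_succ
  · have := hI.card_le
    simp only [List.sum_cons, hocc] at *
    omega

theorem switch (hI : Invariant u v bud (0 :: rest) side ps) : Invariant u v bud rest (!side) ps :=
  ⟨hI.cover, hI.linked_iff, fun t t' h => dupWinsSched_zero_cons.1 (hI.wins t t' h),
    by simpa using hI.card_le⟩

include hA hu in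
theorem of_roots (hbud : sched.sum ≤ bud) : Invariant u v bud sched side [(A.root, B.root)] := by
  have hnot (t t') : ¬ Linked u v [(A.root, B.root)] t t' := by
    simpa [Linked] using fun h _ => RTree.not_isDesc_root hA (hu.parent_eq t) h
  have hocc : occupied u v [(A.root, B.root)] = ∅ := by
    ext t; simpa [mem_occupied] using hnot t
  refine ⟨by simp, fun t₁ t₁' _ _ h => absurd h (hnot t₁ t₁'),
    fun t t' h => absurd h (hnot t t'), by simpa [hocc] using hbud⟩

end Invariant

end Matching

section Strategy

/-- Duplicator's wins on a pair `(C, D)` of trees of level `r` (the subtree at a child of the root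
of `T₁^{(r+1)}` and the subtree at the child of the root of `T₂^{(r+1)}` carrying `T₁^{(r)}`)
for every schedule that can remain when Spoiler first plays in one of them. -/
def SpecialWins (k r : ℕ) (C D : RTree) : Prop :=
  (∀ a ≤ k, ∀ b ≤ r,
    DupWinsSched C D (a :: List.replicate b k) false [(C.root, D.root)]) ∧
  (1 ≤ r → ∀ a ≤ k, DupWinsSched C D [a] true [(C.root, D.root)])

/-- The number `b` of batches of `k` rounds that may follow the current one when Spoiler plays
on side `side` in the game on trees of level `r + 1`. -/
def BatchBound (k m r : ℕ) : Bool → ℕ → Prop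
  | false, b => b ≤ r
  | true, b => b ≤ r + 1 ∧ 2 * k ≤ m

theorem BatchBound.switch {k m r b : ℕ} {side : Bool} (hm : k * (r + 1) ≤ m)
    (h : BatchBound k m r side (b + 1)) : BatchBound k m r (!side) b := by
  cases side
  · have hb : b + 1 ≤ r := h
    exact ⟨by omega, by nlinarith⟩
  · exact Nat.le_of_succ_le_succ h.1

variable {A B : RTree} {m k r bud : ℕ} {u : Fin (m + 1) → A.V} {v : Fin (m + 1) → B.V}
  {ps : List (A.V × B.V)}
  (hA : A.IsRooted) (hB : B.IsRooted) (hu : A.EnumRootChildren u) (hv : B.EnumRootChildren v)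
  (φ : ∀ t t' : Fin (m + 1), t'.1 < m → TreeIso (A.subtree (u t)) (B.subtree (v t')))
  (hspecial : ∀ t, SpecialWins k r (A.subtree (u t)) (B.subtree (v (Fin.last m))))

namespace Invariant

theorem card_le_card_occupied {sched : List ℕ} {side : Bool}
    (hI : Invariant u v bud sched side ps) {S : Finset (Fin (m + 1))}
    (hS : ∀ t' ∈ S, ∃ t, Linked u v ps t t') : S.card ≤ (occupied u v ps).card :=
  Finset.card_le_card_of_forall_subsingleton (fun t' t => Linked u v ps t t')
    (fun t' ht' => (hS t' ht').imp fun _ h => ⟨mem_occupied.2 ⟨t', h⟩, h⟩)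
    (fun _ _ _ h₁ _ h₂ => (hI.linked_iff _ _ _ _ h₁.2 h₂.2).1 rfl)

theorem card_occupied_le {sched : List ℕ} {side : Bool}
    (hI : Invariant u v bud sched side ps) {S : Finset (Fin (m + 1))}
    (hS : ∀ t t', Linked u v ps t t' → t' ∈ S) : (occupied u v ps).card ≤ S.card :=
  Finset.card_le_card_of_forall_subsingleton (fun t t' => Linked u v ps t t')
    (fun t ht => (mem_occupied.1 ht).imp fun t' h => ⟨hS t t' h, h⟩)
    (fun _ _ _ h₁ _ h₂ => (hI.linked_iff _ _ _ _ h₁.2 h₂.2).2 rfl)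

theorem exists_forall_not_linked {sched : List ℕ} {side : Bool}
    (hI : Invariant u v bud sched side ps) {t' : Fin (m + 1)} (ht' : ∀ t, ¬ Linked u v ps t t') :
    ∃ t, ∀ t'', ¬ Linked u v ps t t'' := by
  by_contra! hall
  have := hI.card_occupied_le (S := Finset.univ.erase t')
    fun _ _ h => Finset.mem_erase.2 ⟨fun e => ht' _ (e ▸ h), Finset.mem_univ _⟩
  rw [Finset.card_erase_of_mem (Finset.mem_univ _), Finset.card_univ, Fintype.card_fin,
    Finset.eq_univ_of_forall (fun t => mem_occupied.2 (hall t)), Finset.card_univ,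
    Fintype.card_fin] at this
  omega

/-- Counting linked pairs: `k * (r + 1) ≤ m ≤ #(occupied u v ps) < m + 1`. -/
theorem last_batch_of_forall_linked {a b : ℕ} {side : Bool}
    (hI : Invariant u v (k * (r + 2)) ((a + 1) :: List.replicate b k) side ps)
    (hm : k * (r + 1) ≤ m) (h2k : 2 * k ≤ m) {t : Fin (m + 1)}
    (ht : ∀ t', ¬ Linked u v ps t t')
    (hlinked : ∀ t' : Fin (m + 1), t'.1 < m → ∃ t₂, Linked u v ps t₂ t') :
    b = 0 ∧ 1 ≤ r ∧ a + 1 ≤ k ∧ ∀ t₂, ¬ Linked u v ps t₂ (Fin.last m) := by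
  have hcard_lt : (occupied u v ps).card < m + 1 := by
    simpa using Finset.card_lt_univ_of_notMem (s := occupied u v ps) (x := t)
      (fun h => (mem_occupied.1 h).elim ht)
  have hcard_ge : m ≤ (occupied u v ps).card := by
    have := hI.card_le_card_occupied (S := Finset.univ.erase (Fin.last m))
      fun t' ht' => hlinked t' (Fin.val_lt_last (Finset.ne_of_mem_erase ht'))
    rwa [Finset.card_erase_of_mem (Finset.mem_univ _), Finset.card_univ, Fintype.card_fin,
      Nat.add_sub_cancel] at this
  have hbud := hI.card_le
  simp only [List.sum_cons, List.sum_replicate, smul_eq_mul] at hbud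
  have hb : b = 0 := by nlinarith
  subst hb
  refine ⟨rfl, by nlinarith, by nlinarith, fun t₂ h₂ => ?_⟩
  have := hI.card_le_card_occupied (S := Finset.univ) fun t' _ =>
    if hreg : t'.1 < m then hlinked t' hreg else ⟨t₂, Fin.eq_last_of_not_lt hreg ▸ h₂⟩
  rw [Finset.card_univ, Fintype.card_fin] at this
  omega

include hA hB hu hv φ hspecial in
theorem exists_cons_false {a b : ℕ}
    (hI : Invariant u v bud ((a + 1) :: List.replicate b k) false ps) (ha : a + 1 ≤ k)
    (hb : b ≤ r) (y : B.V) :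
    ∃ x, Invariant u v bud (a :: List.replicate b k) false ((x, y) :: ps) := by
  by_cases hyr : y = B.root
  · exact ⟨A.root, hyr ▸ hI.cons_root hA.parent_root hu⟩
  obtain ⟨t', hy⟩ := hv.exists_isDesc hB hyr
  by_cases hlinked : ∃ t, Linked u v ps t t'
  · obtain ⟨t, hl⟩ := hlinked
    obtain ⟨x, hx⟩ := dupWinsSched_succ_cons_false.1 (hI.wins t t' hl) ⟨y, hy⟩
    exact ⟨x.1, hI.cons hA.parent_root hB.parent_root hu hv x.2 hy
      (fun _ _ h => hI.linked_iff _ _ _ _ h hl) hx⟩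
  push Not at hlinked
  obtain ⟨t, ht⟩ := hI.exists_forall_not_linked hlinked
  have hlink (t₂ t₂') (h : Linked u v ps t₂ t₂') : t₂ = t ↔ t₂' = t' :=
    iff_of_false (fun e => ht _ (e ▸ h)) (fun e => hlinked _ (e ▸ h))
  have hfresh := restrictPairs_eq_singleton_of_not_linked (ht t')
  by_cases hreg : t'.1 < m
  · let x := (φ t t' hreg).toEquiv.symm ⟨y, hy⟩
    refine ⟨x.1, hI.cons hA.parent_root hB.parent_root hu hv x.2 hy hlink ?_⟩
    rw [hfresh]
    exact dupWinsSched_of_iso (φ t t' hreg) (List.forall_mem_cons.2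
      ⟨((φ t t' hreg).toEquiv.apply_symm_apply _).symm,
        List.forall_mem_singleton.2 (φ t t' hreg).map_root.symm⟩)
  · obtain rfl := Fin.eq_last_of_not_lt hreg
    obtain ⟨x, hx⟩ :=
      dupWinsSched_succ_cons_false.1 ((hspecial t).1 (a + 1) ha b hb) ⟨y, hy⟩
    exact ⟨x.1, hI.cons hA.parent_root hB.parent_root hu hv x.2 hy hlink (by rwa [hfresh])⟩

include hA hB hu hv φ hspecial in
theorem exists_cons_true {a b : ℕ}
    (hI : Invariant u v (k * (r + 2)) ((a + 1) :: List.replicate b k) true ps)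
    (hm : k * (r + 1) ≤ m) (h2k : 2 * k ≤ m) (x : A.V) :
    ∃ y, Invariant u v (k * (r + 2)) (a :: List.replicate b k) true ((x, y) :: ps) := by
  by_cases hxr : x = A.root
  · exact ⟨B.root, hxr ▸ hI.cons_root hA.parent_root hu⟩
  obtain ⟨t, hx⟩ := hu.exists_isDesc hA hxr
  by_cases hocc : ∃ t', Linked u v ps t t'
  · obtain ⟨t', hl⟩ := hocc
    obtain ⟨y, hy⟩ := dupWinsSched_succ_cons_true.1 (hI.wins t t' hl) ⟨x, hx⟩
    exact ⟨y.1, hI.cons hA.parent_root hB.parent_root hu hv hx y.2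
      (fun _ _ h => hI.linked_iff _ _ _ _ h hl) hy⟩
  push Not at hocc
  have hfresh (t') := restrictPairs_eq_singleton_of_not_linked (hocc t')
  have hlink {t'} (ht' : ∀ t₂, ¬ Linked u v ps t₂ t') (t₂ t₂')
      (h : Linked u v ps t₂ t₂') : t₂ = t ↔ t₂' = t' :=
    iff_of_false (fun e => hocc _ (e ▸ h)) (fun e => ht' _ (e ▸ h))
  by_cases hfree : ∃ t', t'.1 < m ∧ ∀ t₂, ¬ Linked u v ps t₂ t'
  · obtain ⟨t', hreg, ht'⟩ := hfree
    let y := (φ t t' hreg).toEquiv ⟨x, hx⟩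
    refine ⟨y.1, hI.cons hA.parent_root hB.parent_root hu hv hx y.2 (hlink ht') ?_⟩
    rw [hfresh]
    exact dupWinsSched_of_iso (φ t t' hreg) (List.forall_mem_cons.2
      ⟨rfl, List.forall_mem_singleton.2 (φ t t' hreg).map_root.symm⟩)
  push Not at hfree
  obtain ⟨rfl, hr, ha, hlast⟩ := hI.last_batch_of_forall_linked hm h2k hocc hfree
  obtain ⟨y, hy⟩ := dupWinsSched_succ_cons_true.1 ((hspecial t).2 hr (a + 1) ha) ⟨x, hx⟩
  exact ⟨y.1, hI.cons hA.parent_root hB.parent_root hu hv hx y.2 (hlink hlast)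
    (by rwa [hfresh])⟩

include hA hB hu hv φ hspecial in
theorem dupWinsSched_succ {a b : ℕ} {side : Bool}
    (hI : Invariant u v (k * (r + 2)) ((a + 1) :: List.replicate b k) side ps)
    (hm : k * (r + 1) ≤ m) (ha : a + 1 ≤ k) (hb : BatchBound k m r side b)
    (IH : ∀ ps', Invariant u v (k * (r + 2)) (a :: List.replicate b k) side ps' →
      DupWinsSched A B (a :: List.replicate b k) side ps') :
    DupWinsSched A B ((a + 1) :: List.replicate b k) side ps := by
  cases side
  · exact dupWinsSched_succ_cons_false.2 fun y =>
      (hI.exists_cons_false hA hB hu hv φ hspecial ha hb y).imp fun _ => IH _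
  · exact dupWinsSched_succ_cons_true.2 fun x =>
      (hI.exists_cons_true hA hB hu hv φ hspecial hm hb.2 x).imp fun _ => IH _

end Invariant

include hA hB hu hv φ hspecial in
theorem dupWinsSched_of_invariant (hm : k * (r + 1) ≤ m) :
    ∀ b side a ps, a ≤ k → BatchBound k m r side b →
      Invariant u v (k * (r + 2)) (a :: List.replicate b k) side ps →
      DupWinsSched A B (a :: List.replicate b k) side ps := by
  intro b
  induction b with
  | zero =>
    intro side a
    induction a with
    | zero =>
      intro ps _ _ hI
      rw [List.replicate_zero, dupWinsSched_zero_cons, dupWinsSched_nil]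
      exact hI.goodPairs hA.parent_root hB.parent_root hu hv
    | succ a ih =>
      exact fun ps ha hb hI => hI.dupWinsSched_succ hA hB hu hv φ hspecial hm ha hb
        fun ps' => ih ps' (by omega) hb
  | succ b ihb =>
    intro side a
    induction a with
    | zero =>
      intro ps _ hb hI
      rw [dupWinsSched_zero_cons]
      exact ihb (!side) k ps le_rfl (hb.switch hm) hI.switch
    | succ a ih =>
      exact fun ps ha hb hI => hI.dupWinsSched_succ hA hB hu hv φ hspecial hm ha hb
        fun ps' => ih ps' (by omega) hb

end Strategy

section Designated

variable {A B : RTree} {m bud ℓ : ℕ} {u : Fin (m + 1) → A.V} {v : Fin (m + 1) → B.V}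
  {sched : List ℕ} {side : Bool} {x : Fin ℓ → A.V} {y : Fin ℓ → B.V}

theorem linked_designated_iff (hA : A.parent A.root = none) (hu : A.EnumRootChildren u)
    {t t' : Fin (m + 1)} :
    Linked u v ((List.ofFn fun i => (x i, y i)) ++ [(A.root, B.root)]) t t' ↔
      ∃ i, A.IsDesc (u t) (x i) ∧ B.IsDesc (v t') (y i) := by
  simp only [Linked, List.mem_append, List.mem_ofFn, List.mem_singleton]
  constructor
  · rintro ⟨p, ⟨i, rfl⟩ | rfl, h⟩
    · exact ⟨i, h⟩
    · exact absurd h.1 (RTree.not_isDesc_root hA (hu.parent_eq t))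
  · rintro ⟨i, h⟩
    exact ⟨_, Or.inl ⟨i, rfl⟩, h⟩

theorem linked_designated_eq_iff (hA : A.parent A.root = none) (hB : B.parent B.root = none)
    (hu : A.EnumRootChildren u) (hv : B.EnumRootChildren v)
    (hy : ∀ i, ∃ t' : Fin (m + 1), t'.1 < m ∧ B.IsDesc (v t') (y i))
    (hIH2 : ∀ i j, i ≠ j →
      ((∃ t, A.IsDesc (u t) (x i) ∧ A.IsDesc (u t) (x j)) ↔
        (∃ t' : Fin (m + 1), t'.1 < m ∧ B.IsDesc (v t') (y i) ∧ B.IsDesc (v t') (y j))))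
    {t₁ t₁' t₂ t₂' : Fin (m + 1)}
    (h₁ : Linked u v ((List.ofFn fun i => (x i, y i)) ++ [(A.root, B.root)]) t₁ t₁')
    (h₂ : Linked u v ((List.ofFn fun i => (x i, y i)) ++ [(A.root, B.root)]) t₂ t₂') :
    t₁ = t₂ ↔ t₁' = t₂' := by
  obtain ⟨i, hx₁, hy₁⟩ := (linked_designated_iff hA hu).1 h₁
  obtain ⟨j, hx₂, hy₂⟩ := (linked_designated_iff hA hu).1 h₂
  by_cases hij : i = j
  · subst hij
    exact iff_of_true (hu.eq_of_isDesc hA hx₁ hx₂) (hv.eq_of_isDesc hB hy₁ hy₂)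
  constructor
  · rintro rfl
    obtain ⟨t', -, hi, hj⟩ := (hIH2 i j hij).1 ⟨t₁, hx₁, hx₂⟩
    exact (hv.eq_of_isDesc hB hy₁ hi).trans (hv.eq_of_isDesc hB hj hy₂)
  · rintro rfl
    have hreg : t₁'.1 < m := (hy i).elim fun t' h => hv.eq_of_isDesc hB h.2 hy₁ ▸ h.1
    obtain ⟨t, hi, hj⟩ := (hIH2 i j hij).2 ⟨t₁', hreg, hy₁, hy₂⟩
    exact (hu.eq_of_isDesc hA hx₁ hi).trans (hu.eq_of_isDesc hA hj hx₂)

theorem card_occupied_designated_le (hA : A.parent A.root = none) (hu : A.EnumRootChildren u)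
    (hx : ∀ i, ∃ t, A.IsDesc (u t) (x i)) :
    (occupied u v ((List.ofFn fun i => (x i, y i)) ++ [(A.root, B.root)])).card ≤ ℓ := by
  choose blk hblk using hx
  have hsub : occupied u v ((List.ofFn fun i => (x i, y i)) ++ [(A.root, B.root)]) ⊆
      Finset.univ.image blk := by
    intro t ht
    obtain ⟨t', h⟩ := mem_occupied.1 ht
    obtain ⟨i, hx, -⟩ := (linked_designated_iff hA hu).1 h
    exact Finset.mem_image.2 ⟨i, Finset.mem_univ _, hu.eq_of_isDesc hA (hblk i) hx⟩
  simpa using (Finset.card_le_card hsub).trans Finset.card_image_le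

theorem Invariant.of_designated (hA : A.parent A.root = none) (hB : B.parent B.root = none)
    (hu : A.EnumRootChildren u) (hv : B.EnumRootChildren v)
    (φ : ∀ t t' : Fin (m + 1), t'.1 < m → TreeIso (A.subtree (u t)) (B.subtree (v t')))
    (hbud : ℓ + sched.sum ≤ bud)
    (hIH1 : ∀ i, (∃ t, A.IsDesc (u t) (x i)) ∧
      (∃ t' : Fin (m + 1), t'.1 < m ∧ B.IsDesc (v t') (y i)))
    (hIH2 : ∀ i j, i ≠ j →
      ((∃ t, A.IsDesc (u t) (x i) ∧ A.IsDesc (u t) (x j)) ↔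
        (∃ t' : Fin (m + 1), t'.1 < m ∧ B.IsDesc (v t') (y i) ∧ B.IsDesc (v t') (y j))))
    (hIH3 : ∀ i (t t' : Fin (m + 1)) (ht' : t'.1 < m) (hx : A.IsDesc (u t) (x i))
      (_hy : B.IsDesc (v t') (y i)), ((φ t t' ht').toEquiv ⟨x i, hx⟩).1 = y i) :
    Invariant u v bud sched side ((List.ofFn fun i => (x i, y i)) ++ [(A.root, B.root)]) := by
  refine ⟨?_, fun _ _ _ _ => linked_designated_eq_iff hA hB hu hv (fun i => (hIH1 i).2) hIH2,
    fun t t' h => ?_, ?_⟩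
  · simp only [List.mem_append, List.mem_ofFn, List.mem_singleton]
    rintro _ (⟨i, rfl⟩ | rfl)
    · exact Or.inr ((hIH1 i).1.elim fun t hx => (hIH1 i).2.elim fun t' hy => ⟨t, t', hx, hy.2⟩)
    · exact Or.inl rfl
  · obtain ⟨i, -, hy⟩ := (linked_designated_iff hA hu).1 h
    have hreg : t'.1 < m := (hIH1 i).2.elim fun t'' h => hv.eq_of_isDesc hB h.2 hy ▸ h.1
    refine dupWinsSched_of_iso (φ t t' hreg) fun q hq => ?_
    rcases eq_roots_or_mem_of_mem_restrictPairs hq with rfl | hq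
    · exact (φ t t' hreg).map_root.symm
    obtain ⟨⟨x', hx'⟩, ⟨y', hy'⟩⟩ := q
    simp only [List.mem_append, List.mem_ofFn, List.mem_singleton, Prod.mk.injEq] at hq
    rcases hq with ⟨j, rfl, rfl⟩ | ⟨rfl, -⟩
    · exact Subtype.ext (hIH3 j t t' hreg hx' hy').symm
    · exact absurd hx' (RTree.not_isDesc_root hA (hu.parent_eq t))
  · have := card_occupied_designated_le (v := v) (y := y) hA hu fun i => (hIH1 i).1
    omega

end Designated

theorem SpecialWins.of_iso {k r : ℕ} {C D C' D' : RTree} (h : SpecialWins k r C D)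
    (e₁ : TreeIso C C') (e₂ : TreeIso D D') : SpecialWins k r C' D' := by
  have hroots :
      [(C.root, D.root)].map (Prod.map e₁.toEquiv e₂.toEquiv) = [(C'.root, D'.root)] := by
    simp [e₁.map_root, e₂.map_root]
  exact ⟨fun a ha b hb => hroots ▸ (h.1 a ha b hb).map_iso e₁ e₂,
    fun hr a ha => hroots ▸ (h.2 hr a ha).map_iso e₁ e₂⟩

end SubtreeMatching

/-! ### The trees `T₁^{(s)}` and `T₂^{(s)}` -/

theorem dupWinsSched_single {T : RTree} (hT : T.parent T.root = none) (a : ℕ)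
    {ps : List (T.V × single.V)} (hps : ∀ p ∈ ps, p = (T.root, single.root)) :
    DupWinsSched T single [a] false ps := by
  induction a generalizing ps with
  | zero =>
    rw [dupWinsSched_zero_cons, dupWinsSched_nil]
    intro p hp q hq
    rw [hps p hp, hps q hq]
    exact ⟨iff_of_false (by simp [hT]) (by simp [single]), iff_of_true rfl rfl⟩
  | succ a ih =>
    exact dupWinsSched_succ_cons_false.2 fun _ =>
      ⟨T.root, ih (List.forall_mem_cons.2 ⟨rfl, hps⟩)⟩

open SubtreeMatching

section Canonical

variable {k m r : ℕ}

theorem dupWinsSched_tree_succ (hm : k * (r + 1) ≤ m)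
    (hspec : SpecialWins k r (Tree2 r k m) (Tree1 r k m)) {side : Bool} {a b : ℕ} (ha : a ≤ k)
    (hb : BatchBound k m r side b) :
    DupWinsSched (Tree1 (r + 1) k m) (Tree2 (r + 1) k m) (a :: List.replicate b k) side
      [((Tree1 (r + 1) k m).root, (Tree2 (r + 1) k m).root)] := by
  let f : Fin (m + 1) → RTree := fun _ => Tree2 r k m
  let g : Fin (m + 1) → RTree := fun i => if i.1 = m then Tree1 r k m else Tree2 r k m
  have hf : ∀ i, (f i).IsRooted := fun _ => (treePair_isRooted m r).2
  have hg : ∀ i, (g i).IsRooted := fun i => by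
    simp only [g]; split
    exacts [(treePair_isRooted m r).1, (treePair_isRooted m r).2]
  have hA : (Tree1 (r + 1) k m).IsRooted := hang_isRooted hf
  have hB : (Tree2 (r + 1) k m).IsRooted := hang_isRooted hg
  have hu := hang_enumRootChildren hf
  have hv := hang_enumRootChildren hg
  have hbud : (a :: List.replicate b k).sum ≤ k * (r + 2) := by
    have : b ≤ r + 1 := by cases side <;> simp only [BatchBound] at hb <;> omega
    simp only [List.sum_cons, List.sum_replicate, smul_eq_mul]
    nlinarith
  exact dupWinsSched_of_invariant hA hB hu hv
    (fun t t' ht' => (hangSubtreeIso hf t).symm.trans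
      ((TreeIso.ofEq (if_neg ht'.ne).symm).trans (hangSubtreeIso hg t')))
    (fun t => hspec.of_iso (hangSubtreeIso hf t)
      ((TreeIso.ofEq (if_pos rfl).symm).trans (hangSubtreeIso hg (Fin.last m))))
    hm b side a _ ha hb (Invariant.of_roots hA.parent_root hu hbud)

theorem specialWins_tree : ∀ r, k * (r + 1) ≤ m → SpecialWins k r (Tree2 r k m) (Tree1 r k m)
  | 0, _ => ⟨fun a _ b hb => by
      obtain rfl : b = 0 := Nat.le_zero.1 hb
      exact dupWinsSched_single (treePair_isRooted m 0).2.parent_root a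
        (List.forall_mem_singleton.2 rfl),
      fun h => absurd h (by omega)⟩
  | r + 1, hm => by
    have hspec := specialWins_tree r (by nlinarith)
    have hm' : k * (r + 1) ≤ m := by nlinarith
    refine ⟨fun a ha b hb => ?_, fun _ a ha => ?_⟩
    · simpa using (dupWinsSched_tree_succ hm' hspec ha
        (show BatchBound k m r true b from ⟨hb, by nlinarith⟩)).swap
    · simpa using (dupWinsSched_tree_succ hm' hspec (b := 0) ha
        (show BatchBound k m r false 0 from Nat.zero_le r)).swap

end Canonical

theorem dup_wins_with_designated_pairs_general (s k m : ℕ) (hs : 1 ≤ s)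
    (hm : s * k ≤ m)
    (u : Fin (m + 1) → (Tree1 s k m).V)
    (v : Fin (m + 1) → (Tree2 s k m).V)
    (hu_child : ∀ t, (Tree1 s k m).parent (u t) = some (Tree1 s k m).root)
    (hu_inj : Function.Injective u)
    (hu_surj : ∀ w, (Tree1 s k m).parent w = some (Tree1 s k m).root → ∃ t, w = u t)
    (hv_child : ∀ t', (Tree2 s k m).parent (v t') = some (Tree2 s k m).root)
    (hv_inj : Function.Injective v)
    (hv_surj : ∀ w, (Tree2 s k m).parent w = some (Tree2 s k m).root → ∃ t', w = v t')
    (hu_copy : ∀ t, Nonempty (TreeIso ((Tree1 s k m).subtree (u t)) (Tree2 (s - 1) k m)))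
    (hv_last : Nonempty
        (TreeIso ((Tree2 s k m).subtree (v ⟨m, Nat.lt_succ_self m⟩)) (Tree1 (s - 1) k m)))
    (φ : ∀ (t : Fin (m + 1)) (t' : Fin (m + 1)), t'.1 < m →
        TreeIso ((Tree1 s k m).subtree (u t)) ((Tree2 s k m).subtree (v t')))
    (ℓ : ℕ) (hℓ : ℓ ≤ k)
    (x : Fin ℓ → (Tree1 s k m).V) (y : Fin ℓ → (Tree2 s k m).V)
    (hIH1 : ∀ i, (∃ t, (Tree1 s k m).IsDesc (u t) (x i)) ∧
        (∃ t' : Fin (m + 1), t'.1 < m ∧ (Tree2 s k m).IsDesc (v t') (y i)))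
    (hIH2 : ∀ i j, i ≠ j →
        ((∃ t, (Tree1 s k m).IsDesc (u t) (x i) ∧ (Tree1 s k m).IsDesc (u t) (x j)) ↔
         (∃ t' : Fin (m + 1), t'.1 < m ∧
            (Tree2 s k m).IsDesc (v t') (y i) ∧ (Tree2 s k m).IsDesc (v t') (y j))))
    (hIH3 : ∀ i (t t' : Fin (m + 1)) (ht' : t'.1 < m)
        (hx : (Tree1 s k m).IsDesc (u t) (x i))
        (_hy : (Tree2 s k m).IsDesc (v t') (y i)),
        ((φ t t' ht').toEquiv ⟨x i, hx⟩).1 = y i) :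
    DupWinsSched (Tree1 s k m) (Tree2 s k m) (List.replicate s k) false
      ((List.ofFn fun i => (x i, y i)) ++
        [((Tree1 s k m).root, (Tree2 s k m).root)]) := by
  obtain ⟨r, rfl⟩ : ∃ r, s = r + 1 := ⟨s - 1, by omega⟩
  have hm' : k * (r + 1) ≤ m := by rwa [mul_comm] at hm
  have hA := (treePair_isRooted m (r + 1)).1
  have hB := (treePair_isRooted m (r + 1)).2
  have hu : (Tree1 (r + 1) k m).EnumRootChildren u := ⟨hu_child, hu_inj, hu_surj⟩
  have hv : (Tree2 (r + 1) k m).EnumRootChildren v := ⟨hv_child, hv_inj, hv_surj⟩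
  have hspecial := fun t => (specialWins_tree r hm').of_iso (hu_copy t).some.symm hv_last.some.symm
  rw [List.replicate_succ]
  refine dupWinsSched_of_invariant hA hB hu hv φ hspecial hm' r false k _ le_rfl le_rfl ?_
  refine Invariant.of_designated hA.parent_root hB.parent_root hu hv φ ?_ hIH1 hIH2 hIH3
  simp only [List.sum_cons, List.sum_replicate, smul_eq_mul]
  nlinarith

/-- the induction hypothesis with designated pairs.  With
`u₁, …, u_{m+1}` the children of the root of `T₁^{(s,k,m)}` and
`v₁, …, v_{m+1}` those of the root of `T₂^{(s,k,m)}` (the subtrees at the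
`u_t` and at `v₁, …, v_m` being copies of `T₂^{(s-1,k,m)}` and the subtree at
`v_{m+1}` a copy of `T₁^{(s-1,k,m)}`), fixed rooted-tree isomorphisms
`φ t t'` between the subtree at `u_t` and the subtree at `v_{t'}` for
`t' ≤ m`, and designated pairs `(x i, y i)` (`ℓ ≤ k` of them) satisfying
(IH1)–(IH3), Duplicator wins `ehr[T₁^{(s,k,m)}, T₂^{(s,k,m)}, s; k]` with
Spoiler starting on `T₂^{(s,k,m)}`, with the designated pairs and the pair of
roots included in the winning conditions. -/
theorem dup_wins_with_designated_pairs (s k m : ℕ) (hs : 1 ≤ s) (hk : 1 ≤ k)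
    (hm : s * k ≤ m)
    (u : Fin (m + 1) → (Tree1 s k m).V)
    (v : Fin (m + 1) → (Tree2 s k m).V)
    (hu_child : ∀ t, (Tree1 s k m).parent (u t) = some (Tree1 s k m).root)
    (hu_inj : Function.Injective u)
    (hu_surj : ∀ w, (Tree1 s k m).parent w = some (Tree1 s k m).root → ∃ t, w = u t)
    (hv_child : ∀ t', (Tree2 s k m).parent (v t') = some (Tree2 s k m).root)
    (hv_inj : Function.Injective v)
    (hv_surj : ∀ w, (Tree2 s k m).parent w = some (Tree2 s k m).root → ∃ t', w = v t')
    (hu_copy : ∀ t, Nonempty (TreeIso ((Tree1 s k m).subtree (u t)) (Tree2 (s - 1) k m)))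
    (hv_copy : ∀ t' : Fin (m + 1), t'.1 < m →
        Nonempty (TreeIso ((Tree2 s k m).subtree (v t')) (Tree2 (s - 1) k m)))
    (hv_last : Nonempty
        (TreeIso ((Tree2 s k m).subtree (v ⟨m, Nat.lt_succ_self m⟩)) (Tree1 (s - 1) k m)))
    (φ : ∀ (t : Fin (m + 1)) (t' : Fin (m + 1)), t'.1 < m →
        TreeIso ((Tree1 s k m).subtree (u t)) ((Tree2 s k m).subtree (v t')))
    (ℓ : ℕ) (hℓ : ℓ ≤ k)
    (x : Fin ℓ → (Tree1 s k m).V) (y : Fin ℓ → (Tree2 s k m).V)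
    (hIH1 : ∀ i, (∃ t, (Tree1 s k m).IsDesc (u t) (x i)) ∧
        (∃ t' : Fin (m + 1), t'.1 < m ∧ (Tree2 s k m).IsDesc (v t') (y i)))
    (hIH2 : ∀ i j, i ≠ j →
        ((∃ t, (Tree1 s k m).IsDesc (u t) (x i) ∧ (Tree1 s k m).IsDesc (u t) (x j)) ↔
         (∃ t' : Fin (m + 1), t'.1 < m ∧
            (Tree2 s k m).IsDesc (v t') (y i) ∧ (Tree2 s k m).IsDesc (v t') (y j))))
    (hIH3 : ∀ i (t t' : Fin (m + 1)) (ht' : t'.1 < m)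
        (hx : (Tree1 s k m).IsDesc (u t) (x i))
        (_hy : (Tree2 s k m).IsDesc (v t') (y i)),
        ((φ t t' ht').toEquiv ⟨x i, hx⟩).1 = y i) :
    DupWinsSched (Tree1 s k m) (Tree2 s k m) (List.replicate s k) false
      ((List.ofFn fun i => (x i, y i)) ++
        [((Tree1 s k m).root, (Tree2 s k m).root)]) :=
  dup_wins_with_designated_pairs_general s k m hs hm u v hu_child hu_inj hu_surj hv_child hv_inj
    hv_surj hu_copy hv_last φ ℓ hℓ x y hIH1 hIH2 hIH3
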